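/- arXiv:2102.01942 — 5 statements merged into one kernel-verified Lean document; each statement's English description precedes it below -/
import Mathlib

section
/- Let G1 and G2 be finite simple graphs, each on the same number n ≥ 4 of vertices, having the same reduced deck. Then G1 and G2 have the same minimum degree and the same maximum degree. -/
open SimpleGraph

/-- The card of a graph `G` at a vertex `v`: the subgraph induced on the
remaining vertices. -/
abbrev graphCard {n : ℕ} (G : SimpleGraph (Fin n)) (v : Fin n) :
    SimpleGraph ({v}ᶜ : Set (Fin n)) :=
  G.induce {v}ᶜ

/-- Two graphs on `n` vertices have the same reduced deck: every isomorphism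
class occurring as a card of one occurs as a card of the other, and vice
versa. -/
def SameReducedDeck {n : ℕ} (G₁ G₂ : SimpleGraph (Fin n)) : Prop :=
  (∀ v, ∃ w, Nonempty (graphCard G₁ v ≃g graphCard G₂ w)) ∧
  (∀ w, ∃ v, Nonempty (graphCard G₁ v ≃g graphCard G₂ w))

open Finset

variable {n : ℕ}

instance cardAdjDec (G : SimpleGraph (Fin n)) [inst : DecidableRel G.Adj] (v : Fin n) :
    DecidableRel (graphCard G v).Adj := fun a b => inst a b

lemma cardDegree (G : SimpleGraph (Fin n)) [DecidableRel G.Adj] (v : Fin n)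
    (u : ({v}ᶜ : Set (Fin n))) :
    (graphCard G v).degree u = ((G.neighborFinset (u : Fin n)).erase v).card := by
  rw [← card_neighborSet_eq_degree, ← Fintype.card_coe]
  apply Fintype.card_congr
  refine ⟨fun w => ⟨(w : Fin n), Finset.mem_erase.2 ⟨?_, (G.mem_neighborFinset _ _).2 w.2⟩⟩,
    fun x => ⟨⟨x.1, ?_⟩, ?_⟩, fun w => rfl, fun x => rfl⟩
  · exact w.1.2
  · exact (Finset.mem_erase.1 x.2).1
  · exact (G.mem_neighborFinset _ _).1 (Finset.mem_erase.1 x.2).2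

lemma one_le_degree_of_adj (G : SimpleGraph (Fin n)) [DecidableRel G.Adj] {u v : Fin n}
    (h : G.Adj u v) : 1 ≤ G.degree u := by
  rw [← card_neighborSet_eq_degree]
  exact Fintype.card_pos_iff.2 ⟨⟨v, h⟩⟩

lemma cardDegree_of_adj (G : SimpleGraph (Fin n)) [DecidableRel G.Adj] {v : Fin n}
    {u : ({v}ᶜ : Set (Fin n))} (h : G.Adj (u : Fin n) v) :
    (graphCard G v).degree u + 1 = G.degree (u : Fin n) := by
  rw [cardDegree, Finset.card_erase_of_mem (by simpa using h)]
  have := one_le_degree_of_adj G h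
  rw [← card_neighborFinset_eq_degree] at *
  omega

lemma cardDegree_of_not_adj (G : SimpleGraph (Fin n)) [DecidableRel G.Adj] {v : Fin n}
    {u : ({v}ᶜ : Set (Fin n))} (h : ¬ G.Adj (u : Fin n) v) :
    (graphCard G v).degree u = G.degree (u : Fin n) := by
  rw [cardDegree, Finset.erase_eq_of_notMem (by simpa using h), card_neighborFinset_eq_degree]

lemma cardDegree_le (G : SimpleGraph (Fin n)) [DecidableRel G.Adj] (v : Fin n)
    (u : ({v}ᶜ : Set (Fin n))) :
    (graphCard G v).degree u ≤ G.degree (u : Fin n) ∧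
      G.degree (u : Fin n) ≤ (graphCard G v).degree u + 1 := by
  by_cases h : G.Adj (u : Fin n) v
  · have := cardDegree_of_adj G h; omega
  · have := cardDegree_of_not_adj G h; omega

lemma sumCardDegree (G : SimpleGraph (Fin n)) [DecidableRel G.Adj] (v : Fin n) :
    (∑ u, (graphCard G v).degree u) + 2 * G.degree v = ∑ x, G.degree x := by
  classical
  have h1 : ∑ x, G.degree x = (∑ x ∈ Finset.univ.erase v, G.degree x) + G.degree v := by
    rw [Finset.sum_erase_add _ _ (Finset.mem_univ v)]
  have h2 : ∑ u, (graphCard G v).degree u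
      = ∑ x ∈ Finset.univ.erase v, ((G.neighborFinset x).erase v).card := by
    rw [Finset.sum_congr rfl (fun u _ => cardDegree G v u)]
    exact (Finset.sum_subtype (p := fun x => x ∈ ({v}ᶜ : Set (Fin n)))
      (Finset.univ.erase v)
      (fun x => by simp only [Finset.mem_erase, Finset.mem_univ, and_true,
        Set.mem_compl_iff, Set.mem_singleton_iff])
      (fun x => ((G.neighborFinset x).erase v).card)).symm
  have h3 : ∀ x ∈ Finset.univ.erase v,
      ((G.neighborFinset x).erase v).card + (if G.Adj x v then 1 else 0) = G.degree x := by
    intro x hx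
    by_cases h : G.Adj x v
    · rw [Finset.card_erase_of_mem (by simpa using h), if_pos h]
      have := one_le_degree_of_adj G h
      rw [← card_neighborFinset_eq_degree] at *
      omega
    · rw [Finset.erase_eq_of_notMem (by simpa using h), if_neg h,
        card_neighborFinset_eq_degree]
      omega
  have h4 : ∑ x ∈ Finset.univ.erase v, (if G.Adj x v then 1 else 0) = G.degree v := by
    rw [← card_neighborFinset_eq_degree, Finset.sum_boole]
    norm_cast
    congr 1
    ext x
    simp only [Finset.mem_filter, Finset.mem_erase, Finset.mem_univ, mem_neighborFinset,
      true_and, and_true]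
    exact ⟨fun ⟨_, hx⟩ => hx.symm, fun hx => ⟨hx.ne', hx.symm⟩⟩
  have h5 : (∑ x ∈ Finset.univ.erase v, ((G.neighborFinset x).erase v).card) + G.degree v
      = ∑ x ∈ Finset.univ.erase v, G.degree x := by
    rw [← h4, ← Finset.sum_add_distrib]
    exact Finset.sum_congr rfl h3
  omega

lemma mySameReducedDeck_symm {A B : SimpleGraph (Fin n)} (h : SameReducedDeck A B) :
    SameReducedDeck B A := by
  refine ⟨fun v => ?_, fun w => ?_⟩
  · obtain ⟨w, ⟨φ⟩⟩ := h.2 v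
    exact ⟨w, ⟨φ.symm⟩⟩
  · obtain ⟨v, ⟨φ⟩⟩ := h.1 w
    exact ⟨v, ⟨φ.symm⟩⟩

lemma iso_degree {V W : Type*} [Fintype V] [Fintype W] {G : SimpleGraph V}
    {H : SimpleGraph W} [DecidableRel G.Adj] [DecidableRel H.Adj] (φ : G ≃g H) (u : V) :
    G.degree u = H.degree (φ u) := by
  rw [← card_neighborSet_eq_degree, ← card_neighborSet_eq_degree]
  exact Fintype.card_congr (φ.mapNeighborSet u)

lemma iso_degree_sum {V W : Type*} [Fintype V] [Fintype W] {G : SimpleGraph V}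
    {H : SimpleGraph W} [DecidableRel G.Adj] [DecidableRel H.Adj] (φ : G ≃g H) :
    ∑ u, G.degree u = ∑ w, H.degree w :=
  Fintype.sum_equiv φ.toEquiv _ _ (fun u => iso_degree φ u)

lemma s_min_le (hn : 1 ≤ n) (A B : SimpleGraph (Fin n)) [DecidableRel A.Adj]
    [DecidableRel B.Adj] (h : SameReducedDeck A B) :
    ((∑ x, A.degree x : ℕ) : ℤ) - 2 * A.minDegree ≤ ((∑ x, B.degree x : ℕ) : ℤ) - 2 * B.minDegree := by
  haveI : Nonempty (Fin n) := Fin.pos_iff_nonempty.1 (by omega)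
  obtain ⟨u, hu⟩ := A.exists_minimal_degree_vertex
  obtain ⟨w, ⟨φ⟩⟩ := h.1 u
  have h1 := sumCardDegree A u
  have h2 := sumCardDegree B w
  have h3 := iso_degree_sum φ
  have h4 := B.minDegree_le_degree w
  omega

lemma s_max_ge (hn : 1 ≤ n) (A B : SimpleGraph (Fin n)) [DecidableRel A.Adj]
    [DecidableRel B.Adj] (h : SameReducedDeck A B) :
    ((∑ x, B.degree x : ℕ) : ℤ) - 2 * B.maxDegree ≤ ((∑ x, A.degree x : ℕ) : ℤ) - 2 * A.maxDegree := by
  haveI : Nonempty (Fin n) := Fin.pos_iff_nonempty.1 (by omega)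
  obtain ⟨u, hu⟩ := A.exists_maximal_degree_vertex
  obtain ⟨w, ⟨φ⟩⟩ := h.1 u
  have h1 := sumCardDegree A u
  have h2 := sumCardDegree B w
  have h3 := iso_degree_sum φ
  have h4 := B.degree_le_maxDegree w
  omega

lemma s_min_eq (hn : 1 ≤ n) (A B : SimpleGraph (Fin n)) [DecidableRel A.Adj]
    [DecidableRel B.Adj] (h : SameReducedDeck A B) :
    ((∑ x, A.degree x : ℕ) : ℤ) - 2 * A.minDegree = ((∑ x, B.degree x : ℕ) : ℤ) - 2 * B.minDegree :=
  le_antisymm (s_min_le hn A B h) (s_min_le hn B A (mySameReducedDeck_symm h))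

lemma s_max_eq (hn : 1 ≤ n) (A B : SimpleGraph (Fin n)) [DecidableRel A.Adj]
    [DecidableRel B.Adj] (h : SameReducedDeck A B) :
    ((∑ x, A.degree x : ℕ) : ℤ) - 2 * A.maxDegree = ((∑ x, B.degree x : ℕ) : ℤ) - 2 * B.maxDegree :=
  le_antisymm (s_max_ge hn B A (mySameReducedDeck_symm h)) (s_max_ge hn A B h)

lemma min_lt_case (hn : 2 ≤ n) (A B : SimpleGraph (Fin n)) [DecidableRel A.Adj]
    [DecidableRel B.Adj] (h : SameReducedDeck A B)
    (hlt : A.minDegree < B.minDegree) : A.minDegree = 0 ∧ B.minDegree = 1 := by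
  haveI : Nonempty (Fin n) := Fin.pos_iff_nonempty.1 (by omega)
  obtain ⟨u, hu⟩ := A.exists_minimal_degree_vertex
  have hA0 : A.minDegree = 0 := by
    by_contra h0
    have hdeg : 0 < (A.neighborFinset u).card := by
      rw [card_neighborFinset_eq_degree]; omega
    obtain ⟨x, hx⟩ := Finset.card_pos.1 hdeg
    have hadj : A.Adj u x := (A.mem_neighborFinset _ _).1 hx
    have hmem : u ∈ ({x}ᶜ : Set (Fin n)) := by
      simp only [Set.mem_compl_iff, Set.mem_singleton_iff]
      exact hadj.ne
    obtain ⟨w, ⟨φ⟩⟩ := h.1 x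
    have hc : (graphCard A x).degree ⟨u, hmem⟩ + 1 = A.degree u :=
      cardDegree_of_adj A hadj
    have hφ : (graphCard B w).degree (φ ⟨u, hmem⟩) = (graphCard A x).degree ⟨u, hmem⟩ :=
      (iso_degree φ ⟨u, hmem⟩).symm
    have h5 := (cardDegree_le B w (φ ⟨u, hmem⟩)).2
    have h6 := B.minDegree_le_degree ((φ ⟨u, hmem⟩ : Fin n))
    omega
  refine ⟨hA0, ?_⟩
  have hdeg0 : A.degree u = 0 := by omega
  haveI : Nontrivial (Fin n) := by
    rw [Fin.nontrivial_iff_two_le]; omega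
  obtain ⟨x, hxu⟩ := exists_ne u
  have hnadj : ¬ A.Adj u x := fun ha => by
    have := one_le_degree_of_adj A ha; omega
  have hmem : u ∈ ({x}ᶜ : Set (Fin n)) := by
    simp only [Set.mem_compl_iff, Set.mem_singleton_iff]
    exact fun e => hxu (e.symm)
  obtain ⟨w, ⟨φ⟩⟩ := h.1 x
  have hc : (graphCard A x).degree ⟨u, hmem⟩ = A.degree u :=
    cardDegree_of_not_adj A hnadj
  have hφ : (graphCard B w).degree (φ ⟨u, hmem⟩) = (graphCard A x).degree ⟨u, hmem⟩ :=
    (iso_degree φ ⟨u, hmem⟩).symm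
  have h5 := (cardDegree_le B w (φ ⟨u, hmem⟩)).2
  have h6 := B.minDegree_le_degree ((φ ⟨u, hmem⟩ : Fin n))
  omega

lemma exists_universal (hn : 2 ≤ n) (A B : SimpleGraph (Fin n)) [DecidableRel A.Adj]
    [DecidableRel B.Adj] (h : SameReducedDeck A B)
    (hΔ : A.maxDegree < B.maxDegree) : ∃ x₀, B.degree x₀ = n - 1 := by
  haveI : Nonempty (Fin n) := Fin.pos_iff_nonempty.1 (by omega)
  obtain ⟨u, hu⟩ := B.exists_maximal_degree_vertex
  refine ⟨u, ?_⟩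
  have hlt : B.degree u < n := by
    have := B.degree_lt_card_verts u
    rwa [Fintype.card_fin] at this
  by_contra hne
  have hcard : (insert u (B.neighborFinset u)).card < (Finset.univ : Finset (Fin n)).card := by
    have h1 := Finset.card_insert_le u (B.neighborFinset u)
    rw [card_neighborFinset_eq_degree] at h1
    rw [Finset.card_univ, Fintype.card_fin]
    omega
  obtain ⟨x, hx⟩ : ∃ x : Fin n, x ∉ insert u (B.neighborFinset u) := by
    by_contra hc
    push_neg at hc
    have := Finset.card_le_card (fun z _ => hc z : (Finset.univ : Finset (Fin n)) ⊆ _)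
    omega
  have hxu : x ≠ u := fun e => hx (by rw [e]; exact Finset.mem_insert_self u _)
  have hnadj : ¬ B.Adj u x := fun ha =>
    hx (Finset.mem_insert_of_mem ((B.mem_neighborFinset _ _).2 ha))
  have hmem : u ∈ ({x}ᶜ : Set (Fin n)) := by
    simp only [Set.mem_compl_iff, Set.mem_singleton_iff]
    exact fun e => hxu e.symm
  obtain ⟨v, ⟨φ⟩⟩ := h.2 x
  have hc : (graphCard B x).degree ⟨u, hmem⟩ = B.degree u :=
    cardDegree_of_not_adj B hnadj
  have hφ : (graphCard A v).degree (φ.symm ⟨u, hmem⟩) = (graphCard B x).degree ⟨u, hmem⟩ := by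
    rw [iso_degree φ (φ.symm ⟨u, hmem⟩), RelIso.apply_symm_apply]
  have h5 := (cardDegree_le A v (φ.symm ⟨u, hmem⟩)).1
  have h6 := A.degree_le_maxDegree ((φ.symm ⟨u, hmem⟩ : Fin n))
  omega

lemma adj_of_full_degree {B : SimpleGraph (Fin n)} [DecidableRel B.Adj] {x₀ : Fin n}
    (hd : B.degree x₀ = n - 1) {y : Fin n} (hy : y ≠ x₀) : B.Adj x₀ y := by
  have hsub : B.neighborFinset x₀ ⊆ Finset.univ.erase x₀ :=
    fun z hz => Finset.mem_erase.2 ⟨((B.mem_neighborFinset _ _).1 hz).ne', Finset.mem_univ z⟩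
  have hcard : (Finset.univ.erase x₀).card ≤ (B.neighborFinset x₀).card := by
    rw [card_neighborFinset_eq_degree, hd, Finset.card_erase_of_mem (Finset.mem_univ _),
      Finset.card_univ, Fintype.card_fin]
  have heq := Finset.eq_of_subset_of_card_le hsub hcard
  have : y ∈ B.neighborFinset x₀ := heq ▸ Finset.mem_erase.2 ⟨hy, Finset.mem_univ y⟩
  exact (B.mem_neighborFinset _ _).1 this

lemma deg_one_neighbor {B : SimpleGraph (Fin n)} [DecidableRel B.Adj] (hn : 3 ≤ n)
    {x₀ : Fin n} (hx₀ : B.degree x₀ = n - 1) {q y : Fin n} (hq : B.degree q = 1)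
    (hadj : B.Adj q y) : y = x₀ := by
  have hqx : q ≠ x₀ := by intro e; rw [e, hx₀] at hq; omega
  have h1 : B.Adj x₀ q := adj_of_full_degree hx₀ hqx
  have hmem : x₀ ∈ B.neighborFinset q := (B.mem_neighborFinset _ _).2 h1.symm
  have hcard : (B.neighborFinset q).card = 1 := by rw [card_neighborFinset_eq_degree, hq]
  obtain ⟨a, ha⟩ := Finset.card_eq_one.1 hcard
  have hax : a = x₀ := by
    have := hmem; rw [ha] at this; exact (Finset.mem_singleton.1 this).symm
  have hy' : y ∈ B.neighborFinset q := (B.mem_neighborFinset _ _).2 hadj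
  rw [ha, hax] at hy'
  exact Finset.mem_singleton.1 hy'

lemma card_no_isolated {B : SimpleGraph (Fin n)} [DecidableRel B.Adj] (hn : 3 ≤ n)
    {x₀ : Fin n} (hx₀ : B.degree x₀ = n - 1) (hδ : B.minDegree = 1) {w : Fin n}
    (hw : w ≠ x₀) (y : ({w}ᶜ : Set (Fin n))) : (graphCard B w).degree y ≠ 0 := by
  intro h0
  haveI : Nonempty (Fin n) := Fin.pos_iff_nonempty.1 (by omega)
  have h1 := (cardDegree_le B w y).2
  have h2 := B.minDegree_le_degree (y : Fin n)
  have hdeg : B.degree (y : Fin n) = 1 := by omega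
  by_cases hadj : B.Adj (y : Fin n) w
  · exact hw (deg_one_neighbor hn hx₀ hdeg hadj)
  · rw [cardDegree_of_not_adj B hadj] at h0; omega

lemma keyContra (hn : 4 ≤ n) (A B : SimpleGraph (Fin n)) [DecidableRel A.Adj]
    [DecidableRel B.Adj] (h : SameReducedDeck A B)
    (hlt : A.minDegree < B.minDegree) : False := by
  haveI : Nonempty (Fin n) := Fin.pos_iff_nonempty.1 (by omega)
  obtain ⟨hA0, hB1⟩ := min_lt_case (by omega) A B h hlt
  have hSmin := s_min_eq (by omega) A B h
  have hSmax := s_max_eq (by omega) A B h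
  have hS : (∑ x, B.degree x) = (∑ x, A.degree x) + 2 := by omega
  have hΔ : A.maxDegree < B.maxDegree := by omega
  obtain ⟨x₀, hx₀⟩ := exists_universal (by omega) A B h hΔ
  obtain ⟨u₀, hu₀⟩ := A.exists_minimal_degree_vertex
  have hu₀0 : A.degree u₀ = 0 := by omega
  have hiso : ∀ y, ¬ A.Adj u₀ y := fun y ha => by
    have := one_le_degree_of_adj A ha; omega
  have claimY : ∀ v : Fin n, v ≠ u₀ → A.degree v = n - 2 := by
    intro v hv
    have hmem : u₀ ∈ ({v}ᶜ : Set (Fin n)) := by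
      simp only [Set.mem_compl_iff, Set.mem_singleton_iff]
      exact fun e => hv e.symm
    obtain ⟨w, ⟨φ⟩⟩ := h.1 v
    have hc0 : (graphCard A v).degree ⟨u₀, hmem⟩ = 0 := by
      rw [cardDegree_of_not_adj A (hiso v)]
      exact hu₀0
    have hφ0 : (graphCard B w).degree (φ ⟨u₀, hmem⟩) = 0 := by
      rw [← iso_degree φ _]; exact hc0
    have hwx : w = x₀ := by
      by_contra hwx
      exact card_no_isolated (by omega) hx₀ hB1 hwx _ hφ0
    subst hwx
    have h1 := sumCardDegree A v
    have h2 := sumCardDegree B w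
    have h3 := iso_degree_sum φ
    omega
  obtain ⟨p, hp⟩ := B.exists_minimal_degree_vertex
  have hp1 : B.degree p = 1 := by omega
  obtain ⟨w, hwx, hwp⟩ : ∃ w : Fin n, w ≠ x₀ ∧ w ≠ p := by
    by_contra hc
    push_neg at hc
    have hsub : (Finset.univ : Finset (Fin n)) ⊆ {x₀, p} := by
      intro z _
      by_cases hz : z = x₀
      · simp [hz]
      · simp [hc z hz]
    have h1 := Finset.card_le_card hsub
    have h2 : ({x₀, p} : Finset (Fin n)).card ≤ 2 :=
      (Finset.card_insert_le _ _).trans (by simp)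
    rw [Finset.card_univ, Fintype.card_fin] at h1
    omega
  have hmemp : p ∈ ({w}ᶜ : Set (Fin n)) := by
    simp only [Set.mem_compl_iff, Set.mem_singleton_iff]
    exact fun e => hwp e.symm
  have hnadjpw : ¬ B.Adj p w := fun ha => hwx (deg_one_neighbor (by omega) hx₀ hp1 ha)
  have hcp : (graphCard B w).degree ⟨p, hmemp⟩ = 1 := by
    rw [cardDegree_of_not_adj B hnadjpw]
    exact hp1
  obtain ⟨v, ⟨φ⟩⟩ := h.2 w
  set q := φ.symm ⟨p, hmemp⟩ with hqdef
  have hq1 : (graphCard A v).degree q = 1 := by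
    rw [iso_degree φ q, hqdef, RelIso.apply_symm_apply]
    exact hcp
  by_cases hv : v = u₀
  · subst hv
    have hqne : (q : Fin n) ≠ v := fun e => q.2 (Set.mem_singleton_iff.2 e)
    have hnadj : ¬ A.Adj (q : Fin n) v := fun ha => hiso _ ha.symm
    have hc := cardDegree_of_not_adj A hnadj
    have hY := claimY _ hqne
    omega
  · have hmem0 : u₀ ∈ ({v}ᶜ : Set (Fin n)) := by
      simp only [Set.mem_compl_iff, Set.mem_singleton_iff]
      exact fun e => hv e.symm
    have hc0 : (graphCard A v).degree ⟨u₀, hmem0⟩ = 0 := by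
      rw [cardDegree_of_not_adj A (hiso v)]
      exact hu₀0
    have hφ0 : (graphCard B w).degree (φ ⟨u₀, hmem0⟩) = 0 := by
      rw [← iso_degree φ _]; exact hc0
    exact card_no_isolated (by omega) hx₀ hB1 hwx _ hφ0

theorem same_min_and_max_degree_of_sameReducedDeck {n : ℕ} (hn : 4 ≤ n)
    (G₁ G₂ : SimpleGraph (Fin n)) [DecidableRel G₁.Adj] [DecidableRel G₂.Adj]
    (h : SameReducedDeck G₁ G₂) :
    G₁.minDegree = G₂.minDegree ∧ G₁.maxDegree = G₂.maxDegree := by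
  by_cases hδ : G₁.minDegree = G₂.minDegree
  · have hSmin := s_min_eq (by omega) G₁ G₂ h
    have hSmax := s_max_eq (by omega) G₁ G₂ h
    exact ⟨hδ, by omega⟩
  · exfalso
    rcases Nat.lt_or_ge G₁.minDegree G₂.minDegree with hlt | hge
    · exact keyContra hn G₁ G₂ h hlt
    · exact keyContra hn G₂ G₁ (mySameReducedDeck_symm h) (by omega)
end

section
/- Let G1 and G2 be finite simple graphs, each on the same number n ≥ 4 of vertices, having the same reduced deck. Then G1 is bipartite if and only if G2 is bipartite. -/
open SimpleGraph

/-- `G` contains a cycle of length `k`. -/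
def HasCycleOfLength {V : Type*} (G : SimpleGraph V) (k : ℕ) : Prop :=
  ∃ (v : V) (c : G.Walk v v), c.IsCycle ∧ c.length = k

set_option linter.unusedSectionVars false

open Finset

instance {V : Type*} {G : SimpleGraph V} [DecidableRel G.Adj] (s : Set V) :
    DecidableRel (G.induce s).Adj :=
  fun a b => inferInstanceAs (Decidable (G.Adj a.1 b.1))

section AuxLemmas
variable {V : Type*} {G : SimpleGraph V} [DecidableEq V]

/-- A graph in which every closed walk has even length is 2-colorable. -/
lemma colorable_two_of_forall_even
    (h : ∀ (u : V) (W : G.Walk u u), Even W.length) : G.Colorable 2 := by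
  have c : G.Coloring Prop := by
    refine Coloring.mk (fun v => Odd (G.dist (G.connectedComponentMk v).out v)) ?_
    intro u w hadj hne
    have hcomp : G.connectedComponentMk u = G.connectedComponentMk w :=
      ConnectedComponent.sound hadj.reachable
    set r := (G.connectedComponentMk u).out with hr
    have hru : G.Reachable r u :=
      ConnectedComponent.exact ((G.connectedComponentMk u).out_eq)
    have hrw : G.Reachable r w :=
      ConnectedComponent.exact (((G.connectedComponentMk u).out_eq).trans hcomp)
    obtain ⟨p, hp⟩ := hru.exists_walk_length_eq_dist
    obtain ⟨q, hq⟩ := hrw.exists_walk_length_eq_dist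
    have heven := h r (p.append (Walk.cons hadj q.reverse))
    rw [Walk.length_append, Walk.length_cons, Walk.length_reverse, hp, hq] at heven
    have h1 : (G.dist r u) % 2 ≠ (G.dist r w) % 2 := by
      rcases heven with ⟨k, hk⟩; omega
    have h2 : ¬ (Odd (G.dist r u) ↔ Odd (G.dist r w)) := by
      rw [Nat.odd_iff, Nat.odd_iff]; omega
    rw [← hcomp] at hne
    exact h2 (iff_of_eq hne)
  have := c.colorable
  simpa using this

/-- Transport a 2-coloring contradiction: an odd closed walk means not 2-colorable. -/
lemma not_colorable_two_of_odd_closed_walk {u : V} (W : G.Walk u u)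
    (hodd : Odd W.length) : ¬ G.Colorable 2 := by
  rintro ⟨c⟩
  have c' : G.Coloring Bool := recolorOfEquiv G finTwoEquiv c
  have := (c'.odd_length_iff_not_congr W).mp hodd
  tauto

/-- Walks avoiding a set's complement can be transferred into the induced subgraph. -/
lemma exists_walk_induce (s : Set V) {a b : V} (W : G.Walk a b)
    (hs : ∀ x ∈ W.support, x ∈ s) :
    ∃ W' : (G.induce s).Walk ⟨a, hs a W.start_mem_support⟩ ⟨b, hs b W.end_mem_support⟩,
      W'.length = W.length := by
  induction W with
  | nil => exact ⟨Walk.nil, rfl⟩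
  | @cons a c b h p ih =>
    have hs' : ∀ x ∈ p.support, x ∈ s := fun x hx => hs x (by simp [Walk.support_cons, hx])
    obtain ⟨W', hW'⟩ := ih hs'
    have hadj : (G.induce s).Adj ⟨a, hs a (Walk.cons h p).start_mem_support⟩
        ⟨c, hs' c p.start_mem_support⟩ := h
    exact ⟨Walk.cons hadj (W'.copy (by congr) rfl), by simp [hW']⟩

lemma length_eq_zero_iff' {a b : V} (w : G.Walk a b) (h : w.length = 0) : a = b := by
  cases w with
  | nil => rfl
  | cons h p => simp [Walk.length_cons] at h

lemma edge_mem_of_length_one {a b : V} (w : G.Walk a b) (h : w.length = 1) :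
    s(a, b) ∈ w.edges := by
  cases w with
  | nil => simp at h
  | cons hadj p =>
    rw [Walk.length_cons] at h
    have := length_eq_zero_iff' p (by omega)
    subst this
    simp [Walk.edges_cons]

lemma length_rotate {u v : V} (c : G.Walk v v) (h : u ∈ c.support) :
    (c.rotate u h).length = c.length := by
  have h1 := (c.rotate_darts u h).perm.length_eq
  rwa [Walk.length_darts, Walk.length_darts] at h1

lemma take_add_drop_length {u v w : V} (p : G.Walk v w) (h : u ∈ p.support) :
    (p.takeUntil u h).length + (p.dropUntil u h).length = p.length := by
  conv_rhs => rw [← p.take_spec h]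
  rw [Walk.length_append]

lemma isPath_closed_nil {u : V} (q : G.Walk u u) (hq : q.IsPath) : q.length = 0 := by
  by_contra h
  have hnil : ¬ q.Nil := by rwa [Walk.nil_iff_length_eq]
  obtain ⟨y, hadj, r, rfl⟩ := Walk.not_nil_iff.mp hnil
  rw [Walk.cons_isPath_iff] at hq
  exact hq.2 r.end_mem_support

lemma path_edge_endpoint {y u : V} (p : G.Walk y u) (hp : p.IsPath)
    (he : s(u, y) ∈ p.edges) : p.length = 1 := by
  cases p with
  | nil => simp at he
  | @cons _ z _ hadj q =>
    rw [Walk.edges_cons, List.mem_cons] at he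
    rw [Walk.cons_isPath_iff] at hp
    rcases he with he | he
    · rw [Sym2.eq_iff] at he
      rcases he with ⟨rfl, rfl⟩ | ⟨rfl, -⟩
      · exact absurd q.end_mem_support hp.2
      · have := isPath_closed_nil q hp.1
        simp [Walk.length_cons, this]
    · exact absurd (q.snd_mem_support_of_mem_edges he) hp.2

lemma card_edge_induce {n : ℕ} (G : SimpleGraph (Fin n)) (v : Fin n) [DecidableRel G.Adj] :
    #(G.induce ({v}ᶜ : Set (Fin n))).edgeFinset + G.degree v = #G.edgeFinset := by
  classical
  have h2 : #(G.induce ({v}ᶜ : Set (Fin n))).edgeFinset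
      = #{e ∈ G.edgeFinset | v ∉ e} := by
    refine Finset.card_bij (fun e _ => Sym2.map Subtype.val e) ?_ ?_ ?_
    · intro e he
      induction e with
      | _ a b =>
        rw [mem_edgeFinset, mem_edgeSet] at he
        have hadj : G.Adj a.val b.val := he
        simp only [Sym2.map_pair_eq, Finset.mem_filter, mem_edgeFinset, mem_edgeSet]
        refine ⟨hadj, ?_⟩
        rw [Sym2.mem_iff]
        rintro (h | h)
        · exact a.prop h.symm
        · exact b.prop h.symm
    · intro e₁ h₁ e₂ h₂ hmap
      exact Sym2.map.injective Subtype.val_injective hmap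
    · intro e he
      rw [Finset.mem_filter, mem_edgeFinset] at he
      induction e with
      | _ a b =>
        obtain ⟨hadj, hv⟩ := he
        rw [mem_edgeSet] at hadj
        rw [Sym2.mem_iff] at hv
        push_neg at hv
        have ha : a ∈ ({v}ᶜ : Set (Fin n)) := fun h => hv.1 (by simpa using h.symm)
        have hb : b ∈ ({v}ᶜ : Set (Fin n)) := fun h => hv.2 (by simpa using h.symm)
        refine ⟨s(⟨a, ha⟩, ⟨b, hb⟩), ?_, ?_⟩
        · rw [mem_edgeFinset, mem_edgeSet]; exact hadj
        · simp [Sym2.map_pair_eq]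
  have h3 : #{e ∈ G.edgeFinset | v ∈ e} = G.degree v := by
    rw [← incidenceFinset_eq_filter, card_incidenceFinset_eq_degree]
  rw [h2, ← h3]
  have := Finset.card_filter_add_card_filter_not (s := G.edgeFinset)
    (p := fun e => v ∉ e)
  simp only [not_not] at this
  exact this
end AuxLemmas

lemma key {n : ℕ} (hn : 4 ≤ n) (G₁ G₂ : SimpleGraph (Fin n))
    (h : SameReducedDeck G₁ G₂) (h1 : G₁.Colorable 2) : G₂.Colorable 2 := by
  classical
  by_contra h2
  -- all cards of G₂ are 2-colorable
  have hcard2 : ∀ w, ((graphCard G₂ w).Colorable 2) := by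
    intro w
    obtain ⟨v, ⟨e⟩⟩ := h.2 w
    exact Colorable.of_hom e.symm.toEmbedding.toHom
      (Colorable.of_hom (Embedding.induce _).toHom h1)
  -- existence of an odd closed walk in G₂
  have hex : ∃ k, Odd k ∧ ∃ u, ∃ W : G₂.Walk u u, W.length = k := by
    by_contra hno
    push_neg at hno
    refine h2 (colorable_two_of_forall_even fun u W => ?_)
    rcases Nat.even_or_odd W.length with he | ho
    · exact he
    · exact absurd rfl (hno W.length ho u W)
  obtain ⟨hLodd, u, W, hWL⟩ := Nat.find_spec hex
  set L := Nat.find hex with hLdef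
  have hmin : ∀ (u' : Fin n) (W' : G₂.Walk u' u'), Odd W'.length → L ≤ W'.length :=
    fun u' W' ho => Nat.find_le ⟨ho, u', W', rfl⟩
  have hLpos : 0 < L := hLodd.pos
  rw [Nat.odd_iff] at hLodd
  -- minimality implies the support tail has no duplicates
  have htail : W.support.tail.Nodup := by
    by_contra hnd
    rw [List.nodup_iff_forall_not_duplicate] at hnd
    push_neg at hnd
    obtain ⟨x, hx⟩ := hnd
    rw [List.duplicate_iff_two_le_count] at hx
    have hxsup : x ∈ W.support :=
      List.mem_of_mem_tail (List.count_pos_iff.mp (by omega))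
    have hW'len : (W.rotate x hxsup).length = W.length := length_rotate W hxsup
    have hW'cnt : 2 ≤ List.count x (W.rotate x hxsup).support.tail := by
      rwa [(W.support_rotate x hxsup).perm.count_eq]
    have hnnil : ¬ (W.rotate x hxsup).Nil := by
      rw [Walk.nil_iff_length_eq]; omega
    obtain ⟨y, hadj, p, hWc⟩ := Walk.not_nil_iff.mp hnnil
    have hpsup : 2 ≤ List.count x p.support := by
      rw [hWc] at hW'cnt; simpa using hW'cnt
    have hxp : x ∈ p.support := List.count_pos_iff.mp (by omega)
    have hsplit := take_add_drop_length p hxp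
    have hq1 : List.count x (p.takeUntil x hxp).support = 1 :=
      p.count_support_takeUntil_eq_one hxp
    have hplen : 1 + p.length = L := by
      rw [hWc, Walk.length_cons] at hW'len
      omega
    have hdrop_pos : 0 < (p.dropUntil x hxp).length := by
      by_contra h0
      have h00 : (p.dropUntil x hxp).length = 0 := by omega
      have hsupp : p.support
          = (p.takeUntil x hxp).support ++ (p.dropUntil x hxp).support.tail := by
        conv_lhs => rw [← p.take_spec hxp]
        rw [Walk.support_append]
      have htl : (p.dropUntil x hxp).support.tail = [] := by
        have hlen := (p.dropUntil x hxp).length_support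
        rw [h00] at hlen
        cases hsup : (p.dropUntil x hxp).support with
        | nil => simp
        | cons a l => rw [hsup] at hlen; simp at hlen; simp [hlen]
      rw [hsupp, htl, List.append_nil, hq1] at hpsup
      omega
    rcases Nat.even_or_odd (p.dropUntil x hxp).length with hev | hod
    · have hA : Odd (Walk.cons hadj (p.takeUntil x hxp)).length := by
        rw [Walk.length_cons, Nat.odd_iff]
        rw [Nat.even_iff] at hev
        omega
      have hge := hmin x _ hA
      rw [Walk.length_cons] at hge
      omega
    · have hge := hmin x _ hod
      omega
  -- decompose W
  have hWnnil : ¬ W.Nil := by rw [Walk.nil_iff_length_eq]; omega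
  obtain ⟨y, hadjW, p, rfl⟩ := Walk.not_nil_iff.mp hWnnil
  have hppath : p.IsPath := by
    rw [Walk.isPath_def]
    simpa [Walk.support_cons] using htail
  -- W is a cycle
  have hWcyc : (Walk.cons hadjW p).IsCycle := by
    rw [Walk.cons_isCycle_iff]
    refine ⟨hppath, fun he => ?_⟩
    have h1len := path_edge_endpoint p hppath he
    rw [Walk.length_cons, h1len] at hWL
    omega
  -- every vertex is in the support of p
  have hsupall : ∀ x : Fin n, x ∈ p.support := by
    intro x
    by_contra hx
    have hxW : x ∉ (Walk.cons hadjW p).support := by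
      rw [Walk.support_cons, List.mem_cons]
      rintro (rfl | hh)
      · exact hx p.end_mem_support
      · exact hx hh
    have hs : ∀ z ∈ (Walk.cons hadjW p).support, z ∈ ({x}ᶜ : Set (Fin n)) := by
      intro z hz
      simp only [Set.mem_compl_iff, Set.mem_singleton_iff]
      rintro rfl
      exact hxW hz
    obtain ⟨W', hW'⟩ := exists_walk_induce ({x}ᶜ) (Walk.cons hadjW p) hs
    refine not_colorable_two_of_odd_closed_walk W' ?_ (hcard2 x)
    rw [hW', hWL, Nat.odd_iff]
    exact hLodd
  -- L = n
  have hplen : p.length + 1 = n := by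
    have hnd : p.support.Nodup := (Walk.isPath_def _).mp hppath
    have huniv : p.support.toFinset = Finset.univ := by
      apply Finset.eq_univ_of_forall
      intro x
      rw [List.mem_toFinset]
      exact hsupall x
    have hlen := congrArg Finset.card huniv
    rw [List.toFinset_card_of_nodup hnd, Finset.card_univ, Fintype.card_fin] at hlen
    rw [Walk.length_support] at hlen
    exact hlen
  have hLn : L = n := by
    rw [← hWL, Walk.length_cons]; omega
  -- every edge of G₂ is an edge of the cycle
  have hedge : ∀ x y : Fin n, G₂.Adj x y → s(x, y) ∈ (Walk.cons hadjW p).edges := by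
    intro x y hxy
    have hxs : x ∈ (Walk.cons hadjW p).support := by
      rw [Walk.support_cons]
      exact List.mem_cons_of_mem _ (hsupall x)
    have hWxlen : ((Walk.cons hadjW p).rotate x hxs).length = L := by
      rw [length_rotate]; exact hWL
    have hys : y ∈ ((Walk.cons hadjW p).rotate x hxs).support := by
      have h1 : y ∈ (Walk.cons hadjW p).support.tail := by
        simpa [Walk.support_cons] using hsupall y
      have h2 : y ∈ ((Walk.cons hadjW p).rotate x hxs).support.tail :=
        (((Walk.cons hadjW p).support_rotate x hxs).mem_iff).mpr h1
      exact List.mem_of_mem_tail h2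
    have hsum := take_add_drop_length _ hys
    rw [hWxlen] at hsum
    have hxyne : x ≠ y := hxy.ne
    have hp1pos : 0 < (((Walk.cons hadjW p).rotate x hxs).takeUntil y hys).length := by
      by_contra h0
      push_neg at h0
      exact hxyne (length_eq_zero_iff'
        (((Walk.cons hadjW p).rotate x hxs).takeUntil y hys) (by omega))
    have hp2pos : 0 < (((Walk.cons hadjW p).rotate x hxs).dropUntil y hys).length := by
      by_contra h0
      push_neg at h0
      exact hxyne (length_eq_zero_iff'
        (((Walk.cons hadjW p).rotate x hxs).dropUntil y hys) (by omega)).symm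
    have hmem : s(x, y) ∈ ((Walk.cons hadjW p).rotate x hxs).edges →
        s(x, y) ∈ (Walk.cons hadjW p).edges := fun hh =>
      (((Walk.cons hadjW p).rotate_edges x hxs).mem_iff).mp hh
    rcases Nat.even_or_odd (((Walk.cons hadjW p).rotate x hxs).takeUntil y hys).length
      with hev | hod
    · have hA : Odd ((((Walk.cons hadjW p).rotate x hxs).takeUntil y hys).append
          (Walk.cons hxy.symm Walk.nil)).length := by
        rw [Walk.length_append, Walk.length_cons, Walk.length_nil, Nat.odd_iff]
        rw [Nat.even_iff] at hev
        omega
      have hge := hmin x _ hA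
      rw [Walk.length_append, Walk.length_cons, Walk.length_nil] at hge
      have hp2one : (((Walk.cons hadjW p).rotate x hxs).dropUntil y hys).length = 1 := by omega
      have hedge2 := edge_mem_of_length_one _ hp2one
      refine hmem ?_
      rw [Sym2.eq_swap]
      exact ((Walk.cons hadjW p).rotate x hxs).edges_dropUntil_subset hys hedge2
    · have hB : Odd (Walk.cons hxy (((Walk.cons hadjW p).rotate x hxs).dropUntil y hys)).length := by
        rw [Walk.length_cons, Nat.odd_iff]
        rw [Nat.odd_iff] at hod
        omega
      have hge := hmin x _ hB
      rw [Walk.length_cons] at hge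
      have hp1one : (((Walk.cons hadjW p).rotate x hxs).takeUntil y hys).length = 1 := by omega
      have hedge1 := edge_mem_of_length_one _ hp1one
      exact hmem (((Walk.cons hadjW p).rotate x hxs).edges_takeUntil_subset hys hedge1)
  -- edge count of G₂
  have hE2card : #G₂.edgeFinset = n := by
    have hE2 : G₂.edgeFinset = (Walk.cons hadjW p).edges.toFinset := by
      ext e
      simp only [mem_edgeFinset, List.mem_toFinset]
      constructor
      · intro he
        induction e with
        | _ a b => exact hedge a b he
      · intro he
        exact (Walk.cons hadjW p).edges_subset_edgeSet he
    rw [hE2, List.toFinset_card_of_nodup hWcyc.isCircuit.isTrail.edges_nodup,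
      Walk.length_edges, Walk.length_cons]
    omega
  -- degrees in G₂ are all 2
  have hdeg2 : ∀ w, G₂.degree w = 2 := by
    have hge : ∀ w, 2 ≤ G₂.degree w := by
      intro w
      have hws : w ∈ (Walk.cons hadjW p).support := by
        rw [Walk.support_cons]
        exact List.mem_cons_of_mem _ (hsupall w)
      have hWwcyc := hWcyc.rotate hws
      have hWwlen : ((Walk.cons hadjW p).rotate w hws).length = L := by
        rw [length_rotate]; exact hWL
      have hWwnnil : ¬ ((Walk.cons hadjW p).rotate w hws).Nil := by
        rw [Walk.nil_iff_length_eq]; omega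
      obtain ⟨z, hz, q, hWwc⟩ := Walk.not_nil_iff.mp hWwnnil
      have hqlen : 0 < q.length := by
        rw [hWwc, Walk.length_cons] at hWwlen
        omega
      have hqrnnil : ¬ q.reverse.Nil := by
        rw [Walk.nil_iff_length_eq, Walk.length_reverse]; omega
      obtain ⟨z2, hz2, r, hqrev⟩ := Walk.not_nil_iff.mp hqrnnil
      have he2 : s(w, z2) ∈ q.edges := by
        have : s(w, z2) ∈ q.reverse.edges := by
          rw [hqrev]; simp [Walk.edges_cons]
        rwa [Walk.edges_reverse, List.mem_reverse] at this
      have hz2nez : z ≠ z2 := by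
        rintro rfl
        have hnd := hWwcyc.isCircuit.isTrail.edges_nodup
        rw [hWwc, Walk.edges_cons, List.nodup_cons] at hnd
        exact hnd.1 he2
      have hlt : 1 < #(G₂.neighborFinset w) :=
        Finset.one_lt_card.mpr
          ⟨z, by rw [mem_neighborFinset]; exact hz,
           z2, by rw [mem_neighborFinset]; exact hz2, hz2nez⟩
      rw [← card_neighborFinset_eq_degree]
      omega
    have hsum := G₂.sum_degrees_eq_twice_card_edges
    rw [hE2card] at hsum
    intro w
    by_contra hne
    have hgt : 2 < G₂.degree w := lt_of_le_of_ne (hge w) (Ne.symm hne)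
    have hlt : ∑ _v : Fin n, 2 < ∑ v : Fin n, G₂.degree v :=
      Finset.sum_lt_sum (fun i _ => hge i) ⟨w, Finset.mem_univ w, hgt⟩
    rw [Finset.sum_const, Finset.card_univ, Fintype.card_fin, smul_eq_mul] at hlt
    omega
  -- every card of G₁ has n - 2 edges
  have hcardedges : ∀ v, #(G₁.induce ({v}ᶜ : Set (Fin n))).edgeFinset + 2 = n := by
    intro v
    obtain ⟨w, ⟨e⟩⟩ := h.1 v
    rw [e.card_edgeFinset_eq]
    have hci := card_edge_induce G₂ w
    rw [hdeg2 w, hE2card] at hci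
    exact hci
  -- all degrees of G₁ are equal, handshake
  have hdeg1 : ∀ v, G₁.degree v + n = #G₁.edgeFinset + 2 := by
    intro v
    have hci := card_edge_induce G₁ v
    have hce := hcardedges v
    omega
  set v0 : Fin n := ⟨0, by omega⟩
  set d := G₁.degree v0 with hd
  have hdall : ∀ v, G₁.degree v = d := by
    intro v
    have hh1 := hdeg1 v
    have hh2 := hdeg1 v0
    omega
  have hsum1 := G₁.sum_degrees_eq_twice_card_edges
  have hsumconst : ∑ v, G₁.degree v = n * d := by
    rw [Finset.sum_congr rfl (fun v _ => hdall v), Finset.sum_const, Finset.card_univ,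
      Fintype.card_fin, smul_eq_mul]
  have hd2 : d = 2 ∧ #G₁.edgeFinset = n := by
    have e1 : n * d = 2 * #G₁.edgeFinset := by rw [← hsumconst]; exact hsum1
    have e2 : d + n = #G₁.edgeFinset + 2 := hdeg1 v0
    obtain ⟨k, rfl⟩ : ∃ k, n = k + 4 := ⟨n - 4, by omega⟩
    have e3 : #G₁.edgeFinset = d + k + 2 := by omega
    rw [e3] at e1
    have e4 : d * (k + 2) = 2 * (k + 2) := by
      have expand : (k + 4) * d = k * d + 4 * d := by ring
      have expand2 : d * (k + 2) = k * d + 2 * d := by ring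
      rw [expand] at e1
      rw [expand2]
      omega
    have e5 : d = 2 := by
      have := Nat.eq_of_mul_eq_mul_right (show 0 < k + 2 by omega) e4
      exact this
    omega
  obtain ⟨hdeq2, hm1⟩ := hd2
  -- final parity contradiction using a 2-coloring of G₁
  obtain ⟨c⟩ := h1
  set A : Finset (Fin n) := Finset.univ.filter (fun x => c x = 0) with hA
  set DA : Finset (G₁.Dart) := Finset.univ.filter (fun dd => c dd.fst = 0) with hDA
  set DB : Finset (G₁.Dart) := Finset.univ.filter (fun dd => ¬ c dd.fst = 0) with hDB
  have hfiber : #DA = 2 * #A := by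
    rw [Finset.card_eq_sum_card_fiberwise (f := fun dd => dd.fst) (t := A)
      (fun dd hdd => by
        rw [hDA, Finset.mem_coe, Finset.mem_filter] at hdd
        rw [hA, Finset.mem_coe, Finset.mem_filter]
        exact ⟨Finset.mem_univ _, hdd.2⟩)]
    have hterm : ∀ x ∈ A, #(DA.filter (fun dd => dd.fst = x)) = 2 := by
      intro x hx
      rw [hA, Finset.mem_filter] at hx
      have hfe : DA.filter (fun dd => dd.fst = x)
          = Finset.univ.filter (fun dd : G₁.Dart => dd.fst = x) := by
        ext dd
        simp only [hDA, Finset.mem_filter, Finset.mem_univ, true_and]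
        constructor
        · rintro ⟨-, hh⟩; exact hh
        · intro hh; exact ⟨by rw [hh]; exact hx.2, hh⟩
      rw [hfe]
      have := G₁.dart_fst_fiber_card_eq_degree x
      rw [hdall x, hdeq2] at this
      convert this using 2
    rw [Finset.sum_congr rfl hterm, Finset.sum_const, smul_eq_mul, mul_comm]
  have hfin2 : ∀ a b : Fin 2, a ≠ b → a ≠ 0 → b = 0 := by decide
  have hbij : #DA = #DB := by
    rw [hDA, hDB]
    apply Finset.card_bij (fun dd _ => dd.symm)
    · intro dd hdd
      rw [Finset.mem_filter] at hdd
      rw [Finset.mem_filter]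
      refine ⟨Finset.mem_univ _, ?_⟩
      have hval := c.valid dd.adj
      intro hh
      have : dd.symm.fst = dd.snd := rfl
      rw [this] at hh
      rw [hdd.2] at hval
      exact hval (by rw [hh])
    · intro d1 h1 d2 h2 hs
      have := congrArg Dart.symm hs
      rwa [Dart.symm_symm, Dart.symm_symm] at this
    · intro dd hdd
      rw [Finset.mem_filter] at hdd
      refine ⟨dd.symm, ?_, by rw [Dart.symm_symm]⟩
      rw [Finset.mem_filter]
      refine ⟨Finset.mem_univ _, ?_⟩
      have hval := c.valid dd.adj
      have : dd.symm.fst = dd.snd := rfl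
      rw [this]
      exact hfin2 _ _ hval hdd.2
  have htot := G₁.dart_card_eq_twice_card_edges
  have hsplit : #DA + #DB = Fintype.card G₁.Dart := by
    rw [hDA, hDB, ← Finset.card_univ]
    exact Finset.card_filter_add_card_filter_not (p := fun dd : G₁.Dart => c dd.fst = 0)
  rw [hm1] at htot
  -- 2*n = #DA + #DAc = 2 * #DA, so n = #DA = 2 * #A, even; but n odd
  have hnodd : n % 2 = 1 := by rw [← hLn]; exact hLodd
  omega


theorem bipartite_of_sameReducedDeck {n : ℕ} (hn : 4 ≤ n)
    (G₁ G₂ : SimpleGraph (Fin n)) (h : SameReducedDeck G₁ G₂) :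
    (G₁.Colorable 2 ↔ G₂.Colorable 2) := by
  constructor
  · exact fun h1 => key hn G₁ G₂ h h1
  · intro h2
    have hsymm : SameReducedDeck G₂ G₁ :=
      ⟨fun v => (h.2 v).imp (fun w ⟨i⟩ => ⟨i.symm⟩),
       fun w => (h.1 w).imp (fun v ⟨i⟩ => ⟨i.symm⟩)⟩
    exact key hn G₂ G₁ hsymm h2
end

section
/- Let G be a finite simple graph on n ≥ 4 vertices. If every card of G is isomorphic to the path graph P_{n−1} on n−1 vertices (equivalently, the reduced deck of G consists of the single isomorphism class of P_{n−1}), then G is isomorphic to the cycle graph C_n on n vertices. Conversely, every card of C_n is isomorphic to P_{n−1}. -/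
open SimpleGraph

/-! ### Auxiliary lemmas -/

lemma finSubVal' {n : ℕ} (a b : Fin n) :
    (a - b).val = if b.val ≤ a.val then a.val - b.val else a.val + n - b.val := by
  rw [Fin.sub_def]
  have ha := a.isLt
  have hb := b.isLt
  split_ifs with h
  · simp only []
    rw [show n - b.val + a.val = (a.val - b.val) + n by omega, Nat.add_mod_right]
    exact Nat.mod_eq_of_lt (by omega)
  · simp only []
    rw [Nat.mod_eq_of_lt (by omega)]
    omega

lemma cycleAdjIff' {n : ℕ} (hn : 2 ≤ n) (k l : Fin n) :
    (cycleGraph n).Adj k l ↔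
      (k.val = l.val + 1 ∨ l.val = k.val + 1 ∨ (k.val = 0 ∧ l.val = n - 1) ∨
        (l.val = 0 ∧ k.val = n - 1)) := by
  rw [cycleGraph_adj', finSubVal', finSubVal']
  have hk := k.isLt
  have hl := l.isLt
  split_ifs <;> omega

lemma pathGraphEdgeCard (m : ℕ) [Fintype (pathGraph m).edgeSet] :
    (pathGraph m).edgeFinset.card = m - 1 := by
  classical
  have himg : (pathGraph m).edgeFinset =
      (Finset.univ : Finset (Fin (m - 1))).image
        (fun i => s(⟨i.1, by have := i.2; omega⟩, ⟨i.1 + 1, by have := i.2; omega⟩)) := by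
    ext e
    induction e with
    | _ a b =>
      simp only [SimpleGraph.mem_edgeFinset, SimpleGraph.mem_edgeSet, pathGraph_adj,
        Finset.mem_image, Finset.mem_univ, true_and, Sym2.eq_iff]
      have ha := a.isLt
      have hb := b.isLt
      constructor
      · rintro (h | h)
        · exact ⟨⟨a.1, by omega⟩, Or.inl ⟨Fin.ext rfl, Fin.ext h⟩⟩
        · exact ⟨⟨b.1, by omega⟩, Or.inr ⟨Fin.ext rfl, Fin.ext h⟩⟩
      · rintro ⟨i, (⟨h1, h2⟩ | ⟨h1, h2⟩)⟩ <;>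
          simp only [Fin.ext_iff] at h1 h2 <;> omega
  rw [himg, Finset.card_image_of_injective _ ?_, Finset.card_univ, Fintype.card_fin]
  intro i j hij
  simp only [Sym2.eq_iff, Fin.ext_iff] at hij
  have := i.2; have := j.2
  apply Fin.ext
  omega

lemma edgeSplit {n : ℕ} (G : SimpleGraph (Fin n)) (v : Fin n)
    [Fintype G.edgeSet] [Fintype (G.induce ({v}ᶜ : Set (Fin n))).edgeSet]
    [Fintype (G.neighborSet v)] :
    G.edgeFinset.card = (G.induce ({v}ᶜ : Set (Fin n))).edgeFinset.card + G.degree v := by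
  classical
  have hinj : Function.Injective (Sym2.map (Subtype.val : ({v}ᶜ : Set (Fin n)) → Fin n)) :=
    Sym2.map.injective Subtype.val_injective
  have hsplit : G.edgeFinset =
      (G.induce ({v}ᶜ : Set (Fin n))).edgeFinset.image (Sym2.map Subtype.val)
        ∪ G.incidenceFinset v := by
    ext e
    induction e with
    | _ a b =>
      simp only [Finset.mem_union, mem_edgeFinset, mem_edgeSet, Finset.mem_image,
        mem_incidenceFinset, mk'_mem_incidenceSet_iff]
      constructor
      · intro hab
        by_cases hv : v = a ∨ v = b
        · exact Or.inr ⟨hab, hv⟩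
        · push_neg at hv
          refine Or.inl ⟨s(⟨a, ?_⟩, ⟨b, ?_⟩), ?_, rfl⟩
          · exact Set.mem_compl_singleton_iff.mpr (Ne.symm hv.1)
          · exact Set.mem_compl_singleton_iff.mpr (Ne.symm hv.2)
          · simpa [mem_edgeFinset, mem_edgeSet, comap_adj] using hab
      · rintro (⟨e', he', hmap⟩ | ⟨hab, _⟩)
        · induction e' with
          | _ x y =>
            simp only [Sym2.map_pair_eq, Sym2.eq_iff] at hmap
            simp only [mem_edgeFinset, mem_edgeSet, comap_adj] at he'
            rcases hmap with ⟨h1, h2⟩ | ⟨h1, h2⟩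
            · rw [← h1, ← h2]; exact he'
            · rw [← h1, ← h2]; exact he'.symm
        · exact hab
  have hdisj : Disjoint
      ((G.induce ({v}ᶜ : Set (Fin n))).edgeFinset.image (Sym2.map Subtype.val))
      (G.incidenceFinset v) := by
    rw [Finset.disjoint_left]
    intro e he hinc
    obtain ⟨e', _, rfl⟩ := Finset.mem_image.mp he
    have hv : v ∈ Sym2.map Subtype.val e' := (G.mem_incidenceFinset v _ |>.mp hinc).2
    induction e' with
    | _ x y =>
      simp only [Sym2.map_pair_eq, Sym2.mem_iff] at hv
      rcases hv with h | h
      · exact x.2 h.symm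
      · exact y.2 h.symm
  rw [hsplit, Finset.card_union_of_disjoint hdisj, Finset.card_image_of_injective _ hinj,
    card_incidenceFinset_eq_degree]

lemma cycleCardIso {n : ℕ} (hn : 4 ≤ n) (v : Fin n) :
    Nonempty ((cycleGraph n).induce ({v}ᶜ : Set (Fin n)) ≃g pathGraph (n - 1)) := by
  haveI : NeZero n := ⟨by omega⟩
  have key : ∀ u : ({v}ᶜ : Set (Fin n)), (u.1 - v).val ≠ 0 ∧ (u.1 - v).val < n := by
    intro u
    refine ⟨fun h => ?_, (u.1 - v).isLt⟩
    have h0 : u.1 - v = 0 := Fin.ext h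
    rw [sub_eq_zero] at h0
    exact u.2 h0
  refine ⟨⟨⟨fun u => ⟨(u.1 - v).val - 1, by have := key u; omega⟩,
    fun i => ⟨v + ⟨i.1 + 1, by have := i.isLt; omega⟩, ?_⟩, ?_, ?_⟩, ?_⟩⟩
  · -- membership in {v}ᶜ
    intro hmem
    rw [Set.mem_singleton_iff] at hmem
    have : (⟨i.1 + 1, by have := i.isLt; omega⟩ : Fin n) = 0 := by
      have := congrArg (· - v) hmem
      simpa using this
    have := congrArg Fin.val this
    simp at this
  · -- left inverse
    intro u
    apply Subtype.ext
    show v + _ = u.1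
    have hk := key u
    have h1 : (⟨(u.1 - v).val - 1 + 1, by omega⟩ : Fin n) = u.1 - v :=
      Fin.ext (by show (u.1 - v).val - 1 + 1 = (u.1 - v).val; omega)
    rw [h1, add_comm, sub_add_cancel]
  · -- right inverse
    intro i
    apply Fin.ext
    show ((v + ⟨i.1 + 1, _⟩) - v).val - 1 = i.1
    rw [add_comm, add_sub_cancel_right]
    show i.1 + 1 - 1 = i.1
    omega
  · -- adjacency
    intro a b
    simp only [Equiv.coe_fn_mk, pathGraph_adj, comap_adj, Function.Embedding.coe_subtype]
    rw [cycleGraph_adj']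
    have hda : a.1 - b.1 = (a.1 - v) - (b.1 - v) := (sub_sub_sub_cancel_right _ _ _).symm
    have hdb : b.1 - a.1 = (b.1 - v) - (a.1 - v) := (sub_sub_sub_cancel_right _ _ _).symm
    have hc1 := finSubVal' (a.1 - v) (b.1 - v)
    have hc2 := finSubVal' (b.1 - v) (a.1 - v)
    rw [hda, hdb, hc1, hc2]
    have hka := key a
    have hkb := key b
    split_ifs <;> omega

lemma structureLemma {n : ℕ} (hn : 4 ≤ n) (G : SimpleGraph (Fin n)) (v₀ : Fin n)
    [DecidableRel G.Adj]
    (hdeg : ∀ w : Fin n, G.degree w = 2)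
    (φ : G.induce ({v₀}ᶜ : Set (Fin n)) ≃g pathGraph (n - 1)) :
    Nonempty (G ≃g cycleGraph n) := by
  classical
  set u : Fin (n - 1) → Fin n := fun i => (φ.symm i).1 with hu
  have hu_ne : ∀ i, u i ≠ v₀ := fun i => (φ.symm i).2
  have hu_inj : Function.Injective u := fun i j h =>
    φ.symm.toEquiv.injective (Subtype.ext h)
  have hu_adj : ∀ i j, G.Adj (u i) (u j) ↔ (pathGraph (n - 1)).Adj i j := by
    intro i j
    rw [← φ.symm.map_adj_iff]
    rfl
  have hu_surj : ∀ w, w ≠ v₀ → ∃ i, u i = w := by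
    intro w hw
    exact ⟨φ ⟨w, Set.mem_compl_singleton_iff.mpr hw⟩, by simp [hu]⟩
  -- interior vertices of the path are not adjacent to v₀
  have hinterior : ∀ i : Fin (n - 1), 0 < i.val → i.val < n - 2 → ¬G.Adj v₀ (u i) := by
    intro i h0 h2 hadj
    have hi := i.isLt
    have ha1 : G.Adj (u i) (u ⟨i.val - 1, by omega⟩) :=
      (hu_adj _ _).mpr (pathGraph_adj.mpr (Or.inr (show i.val - 1 + 1 = i.val by omega)))
    have ha2 : G.Adj (u i) (u ⟨i.val + 1, by omega⟩) :=
      (hu_adj _ _).mpr (pathGraph_adj.mpr (Or.inl (show i.val + 1 = i.val + 1 by rfl)))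
    have hsub : ({v₀, u ⟨i.val - 1, by omega⟩, u ⟨i.val + 1, by omega⟩} : Finset (Fin n))
        ⊆ G.neighborFinset (u i) := by
      intro x hx
      simp only [Finset.mem_insert, Finset.mem_singleton] at hx
      rw [mem_neighborFinset]
      rcases hx with rfl | rfl | rfl
      · exact hadj.symm
      · exact ha1
      · exact ha2
    have hne12 : u ⟨i.val - 1, by omega⟩ ≠ u ⟨i.val + 1, by omega⟩ := by
      intro h
      have := hu_inj h
      simp only [Fin.mk.injEq] at this
      omega
    have hcard : ({v₀, u ⟨i.val - 1, by omega⟩, u ⟨i.val + 1, by omega⟩} :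
        Finset (Fin n)).card = 3 := by
      rw [Finset.card_insert_of_notMem, Finset.card_insert_of_notMem, Finset.card_singleton]
      · simp only [Finset.mem_singleton]; exact hne12
      · simp only [Finset.mem_insert, Finset.mem_singleton]
        push_neg
        exact ⟨(hu_ne _).symm, (hu_ne _).symm⟩
    have := Finset.card_le_card hsub
    rw [hcard] at this
    have := hdeg (u i)
    unfold SimpleGraph.degree at this
    omega
  have hz : (0 : ℕ) < n - 1 := by omega
  have hl' : n - 2 < n - 1 := by omega
  set z : Fin (n - 1) := ⟨0, hz⟩ with hzdef
  set l : Fin (n - 1) := ⟨n - 2, hl'⟩ with hldef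
  have hnbr : G.neighborFinset v₀ = {u z, u l} := by
    apply Finset.eq_of_subset_of_card_le
    · intro w hw
      rw [mem_neighborFinset] at hw
      have hwne : w ≠ v₀ := fun h => G.loopless.irrefl v₀ (h ▸ hw)
      obtain ⟨i, rfl⟩ := hu_surj w hwne
      have hi := i.isLt
      have : i.val = 0 ∨ i.val = n - 2 := by
        by_contra hcon
        push_neg at hcon
        exact hinterior i (by omega) (by omega) hw
      rcases this with h | h
      · have : i = z := Fin.ext h
        rw [this]; simp
      · have : i = l := Fin.ext h
        rw [this]; simp
    · rw [show (G.neighborFinset v₀).card = G.degree v₀ from rfl, hdeg]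
      exact (Finset.card_insert_le _ _).trans (by simp)
  have hadjz : G.Adj v₀ (u z) := by
    rw [← mem_neighborFinset, hnbr]; simp
  have hadjl : G.Adj v₀ (u l) := by
    rw [← mem_neighborFinset, hnbr]; simp
  -- the bijection
  set f : Fin n → Fin n :=
    fun k => if hk : k.val = 0 then v₀ else u ⟨k.val - 1, by have := k.isLt; omega⟩ with hf
  have hf_inj : Function.Injective f := by
    intro k m h
    simp only [hf] at h
    by_cases hk : k.val = 0 <;> by_cases hm : m.val = 0
    · exact Fin.ext (by omega)
    · rw [dif_pos hk, dif_neg hm] at h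
      exact absurd h.symm (hu_ne _)
    · rw [dif_neg hk, dif_pos hm] at h
      exact absurd h (hu_ne _)
    · rw [dif_neg hk, dif_neg hm] at h
      have := hu_inj h
      simp only [Fin.mk.injEq] at this
      exact Fin.ext (by omega)
  have key : ∀ a b : Fin n, G.Adj (f a) (f b) ↔ (cycleGraph n).Adj a b := by
    intro a b
    rw [cycleAdjIff' (by omega)]
    have hA := a.isLt
    have hB := b.isLt
    by_cases ha : a.val = 0 <;> by_cases hb : b.val = 0
    · simp only [hf, dif_pos ha, dif_pos hb]
      exact iff_of_false (G.loopless.irrefl v₀) (by omega)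
    · simp only [hf, dif_pos ha, dif_neg hb]
      constructor
      · intro h
        have : b.val - 1 = 0 ∨ b.val - 1 = n - 2 := by
          by_contra hcon
          push_neg at hcon
          exact hinterior ⟨b.val - 1, by omega⟩
            (show 0 < b.val - 1 by omega) (show b.val - 1 < n - 2 by omega) h
        omega
      · intro h
        have hb1 : b.val = 1 ∨ b.val = n - 1 := by omega
        rcases hb1 with h1 | h1
        · have : (⟨b.val - 1, by omega⟩ : Fin (n - 1)) = z := Fin.ext (by show b.val - 1 = 0; omega)
          rw [this]; exact hadjz
        · have : (⟨b.val - 1, by omega⟩ : Fin (n - 1)) = l :=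
            Fin.ext (by show b.val - 1 = n - 2; omega)
          rw [this]; exact hadjl
    · simp only [hf, dif_neg ha, dif_pos hb]
      rw [G.adj_comm]
      constructor
      · intro h
        have : a.val - 1 = 0 ∨ a.val - 1 = n - 2 := by
          by_contra hcon
          push_neg at hcon
          exact hinterior ⟨a.val - 1, by omega⟩
            (show 0 < a.val - 1 by omega) (show a.val - 1 < n - 2 by omega) h
        omega
      · intro h
        have ha1 : a.val = 1 ∨ a.val = n - 1 := by omega
        rcases ha1 with h1 | h1
        · have : (⟨a.val - 1, by omega⟩ : Fin (n - 1)) = z := Fin.ext (by show a.val - 1 = 0; omega)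
          rw [this]; exact hadjz
        · have : (⟨a.val - 1, by omega⟩ : Fin (n - 1)) = l :=
            Fin.ext (by show a.val - 1 = n - 2; omega)
          rw [this]; exact hadjl
    · simp only [hf, dif_neg ha, dif_neg hb]
      rw [hu_adj, pathGraph_adj]
      show (a.val - 1 + 1 = b.val - 1 ∨ b.val - 1 + 1 = a.val - 1) ↔ _
      omega
  let σ : cycleGraph n ≃g G :=
    ⟨Equiv.ofBijective f (Finite.injective_iff_bijective.mp hf_inj), fun {a b} => key a b⟩
  exact ⟨σ.symm⟩

theorem cycleGraph_iff_all_cards_path {n : ℕ} (hn : 4 ≤ n) :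
    (∀ G : SimpleGraph (Fin n),
      (∀ v : Fin n, Nonempty (graphCard G v ≃g pathGraph (n - 1))) →
        Nonempty (G ≃g cycleGraph n)) ∧
    (∀ v : Fin n, Nonempty (graphCard (cycleGraph n) v ≃g pathGraph (n - 1))) := by
  classical
  constructor
  · intro G hG
    have hpath : (pathGraph (n - 1)).edgeFinset.card = n - 2 := by
      rw [pathGraphEdgeCard]; omega
    have hcard : ∀ v : Fin n, (G.induce ({v}ᶜ : Set (Fin n))).edgeFinset.card = n - 2 :=
      fun v => ((hG v).some.card_edgeFinset_eq).trans hpath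
    have hE : ∀ v : Fin n, G.edgeFinset.card = (n - 2) + G.degree v := by
      intro v
      rw [edgeSplit G v, hcard v]
    have hdeg_all : ∀ v : Fin n, G.degree v = G.edgeFinset.card - (n - 2) :=
      fun v => by have := hE v; omega
    have hsum := G.sum_degrees_eq_twice_card_edges
    rw [Finset.sum_congr rfl (fun v _ => hdeg_all v), Finset.sum_const, Finset.card_univ,
      Fintype.card_fin, smul_eq_mul] at hsum
    set E := G.edgeFinset.card with hEdef
    set d := E - (n - 2) with hd
    have hEd : E = (n - 2) + d := by
      have := hE ⟨0, by omega⟩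
      omega
    have h1 : n * d = 2 * (n - 2) + 2 * d := by
      rw [hsum, hEd]; ring
    have h2 : (n - 2) * d + 2 * d = 2 * (n - 2) + 2 * d := by
      calc (n - 2) * d + 2 * d = ((n - 2) + 2) * d := (Nat.add_mul _ _ _).symm
        _ = n * d := by congr 1; omega
        _ = 2 * (n - 2) + 2 * d := h1
    have h3 : (n - 2) * d = (n - 2) * 2 := by
      have := Nat.add_right_cancel h2
      omega
    have hd2 : d = 2 := Nat.eq_of_mul_eq_mul_left (by omega) h3
    have hdeg2 : ∀ v : Fin n, G.degree v = 2 := fun v => by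
      rw [hdeg_all v]; exact hd2
    exact structureLemma hn G ⟨0, by omega⟩ hdeg2 (hG ⟨0, by omega⟩).some
  · intro v
    exact cycleCardIso hn v
end

section
/- Let D1 and D2 be finite simple digraphs (loopless, with at most one arc in each direction between any two vertices), each on the same number n ≥ 3 of vertices, having the same reduced deck. Then D1 is a tournament if and only if D2 is a tournament. -/
/-- A finite simple digraph on a vertex type `V`: loopless, and (since
adjacency is a proposition) with at most one arc in each direction between
any two vertices. -/
structure SimpleDigraph (V : Type) where
  Adj : V → V → Prop
  loopless : ∀ v, ¬ Adj v v

/-- The subdigraph induced on a set of vertices. -/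
def SimpleDigraph.induce {V : Type} (D : SimpleDigraph V) (s : Set V) :
    SimpleDigraph s where
  Adj a b := D.Adj a b
  loopless v := D.loopless v

/-- Isomorphism of digraphs. -/
def SimpleDigraph.Iso {V W : Type} (D : SimpleDigraph V) (E : SimpleDigraph W) : Prop :=
  ∃ e : V ≃ W, ∀ a b, D.Adj a b ↔ E.Adj (e a) (e b)

/-- The card of a digraph `D` at a vertex `v`: the subdigraph induced on the
remaining vertices. -/
def digraphCard {n : ℕ} (D : SimpleDigraph (Fin n)) (v : Fin n) :
    SimpleDigraph ({v}ᶜ : Set (Fin n)) :=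
  D.induce {v}ᶜ

/-- Two digraphs on `n` vertices have the same reduced deck: every isomorphism
class occurring as a card of one occurs as a card of the other, and vice
versa. -/
def SameReducedDeckD {n : ℕ} (D₁ D₂ : SimpleDigraph (Fin n)) : Prop :=
  (∀ v, ∃ w, (digraphCard D₁ v).Iso (digraphCard D₂ w)) ∧
  (∀ w, ∃ v, (digraphCard D₁ v).Iso (digraphCard D₂ w))

/-- Two digraphs on `n` vertices have the same (full, multiset) deck: there is
a bijection of the vertex sets matching up the cards, up to isomorphism. -/
def SameDeckD {n : ℕ} (D₁ D₂ : SimpleDigraph (Fin n)) : Prop :=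
  ∃ σ : Equiv.Perm (Fin n), ∀ v, (digraphCard D₁ v).Iso (digraphCard D₂ (σ v))

/-- A tournament: every pair of distinct vertices is joined by exactly one
arc, in exactly one direction. -/
def SimpleDigraph.IsTournament {V : Type} (D : SimpleDigraph V) : Prop :=
  ∀ a b : V, a ≠ b → (D.Adj a b ↔ ¬ D.Adj b a)


lemma iso_isTournament {V W : Type} {D : SimpleDigraph V} {E : SimpleDigraph W}
    (h : D.Iso E) (hD : D.IsTournament) : E.IsTournament := by
  obtain ⟨e, he⟩ := h
  intro a b hab
  have := hD (e.symm a) (e.symm b) (fun hc => hab (by simpa using congrArg e hc))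
  simpa [he, e.apply_symm_apply] using this

lemma card_isTournament {n : ℕ} {D : SimpleDigraph (Fin n)} (hD : D.IsTournament)
    (v : Fin n) : (digraphCard D v).IsTournament := by
  intro a b hab
  exact hD a.1 b.1 (fun hc => hab (Subtype.ext hc))

lemma isTournament_of_cards {n : ℕ} (hn : 3 ≤ n) {D : SimpleDigraph (Fin n)}
    (hD : ∀ v, (digraphCard D v).IsTournament) : D.IsTournament := by
  intro a b hab
  have hcard : ({a, b} : Finset (Fin n)).card < n := by
    calc ({a, b} : Finset (Fin n)).card ≤ 2 := Finset.card_insert_le _ _ |>.trans (by simp)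
    _ < n := by omega
  obtain ⟨v, hv⟩ : ∃ v : Fin n, v ∉ ({a, b} : Finset (Fin n)) := by
    by_contra hc
    push_neg at hc
    have : (Finset.univ : Finset (Fin n)) ⊆ {a, b} := fun x _ => hc x
    have := Finset.card_le_card this
    simp at this
    omega
  simp only [Finset.mem_insert, Finset.mem_singleton, not_or] at hv
  have ha : a ∈ ({v}ᶜ : Set (Fin n)) := by simp [Ne.symm hv.1]
  have hb : b ∈ ({v}ᶜ : Set (Fin n)) := by simp [Ne.symm hv.2]
  exact hD v ⟨a, ha⟩ ⟨b, hb⟩ (fun hc => hab (congrArg Subtype.val hc))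

theorem isTournament_of_sameReducedDeck {n : ℕ} (hn : 3 ≤ n)
    (D₁ D₂ : SimpleDigraph (Fin n)) (h : SameReducedDeckD D₁ D₂) :
    (D₁.IsTournament ↔ D₂.IsTournament) := by
  constructor
  · intro h1
    apply isTournament_of_cards hn
    intro w
    obtain ⟨v, hv⟩ := h.2 w
    exact iso_isTournament hv (card_isTournament h1 v)
  · intro h2
    apply isTournament_of_cards hn
    intro v
    obtain ⟨w, hw⟩ := h.1 v
    have : (digraphCard D₁ v).Iso (digraphCard D₂ w) := hw
    obtain ⟨e, he⟩ := this
    exact iso_isTournament ⟨e.symm, fun a b => by simpa [he, e.apply_symm_apply] using Iff.rfl⟩ (card_isTournament h2 w)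
end

section
/- There exist two non-isomorphic tournaments on 7 vertices that have the same reduced deck but different decks. In particular, the tournaments T1 and T2 on vertex set {1,…,7} given by the adjacency matrices A1 = [[0,0,1,0,0,1,0],[1,0,1,0,0,0,0],[0,0,0,1,0,1,1],[1,1,0,0,1,0,0],[1,1,1,0,0,0,0],[0,1,0,1,1,0,1],[1,1,0,1,1,0,0]] and A2 = [[0,1,1,0,0,0,0],[0,0,1,0,0,0,1],[0,0,0,0,0,1,1],[1,1,1,0,0,0,0],[1,1,1,1,0,0,0],[1,1,0,1,1,0,0],[1,0,0,1,1,1,0]] (where entry (i,j) = 1 means there is an arc from vertex i to vertex j) are non-isomorphic, have the same reduced deck, and have different decks. -/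
/-- The adjacency matrix of the first tournament. -/
def A1 : Fin 7 → Fin 7 → ℕ :=
  ![![0,0,1,0,0,1,0],
    ![1,0,1,0,0,0,0],
    ![0,0,0,1,0,1,1],
    ![1,1,0,0,1,0,0],
    ![1,1,1,0,0,0,0],
    ![0,1,0,1,1,0,1],
    ![1,1,0,1,1,0,0]]

/-- The adjacency matrix of the second tournament. -/
def A2 : Fin 7 → Fin 7 → ℕ :=
  ![![0,1,1,0,0,0,0],
    ![0,0,1,0,0,0,1],
    ![0,0,0,0,0,1,1],
    ![1,1,1,0,0,0,0],
    ![1,1,1,1,0,0,0],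
    ![1,1,0,1,1,0,0],
    ![1,0,0,1,1,1,0]]

/-- The first tournament: there is an arc from `i` to `j` iff `A1 i j = 1`. -/
def T1 : SimpleDigraph (Fin 7) where
  Adj i j := A1 i j = 1
  loopless := by decide

/-- The second tournament: there is an arc from `i` to `j` iff `A2 i j = 1`. -/
def T2 : SimpleDigraph (Fin 7) where
  Adj i j := A2 i j = 1
  loopless := by decide

/-! ### Auxiliary material -/

instance T1.decAdj : ∀ a b, Decidable (T1.Adj a b) :=
  fun a b => inferInstanceAs (Decidable (A1 a b = 1))

instance T2.decAdj : ∀ a b, Decidable (T2.Adj a b) :=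
  fun a b => inferInstanceAs (Decidable (A2 a b = 1))

instance digraphCard.decAdj {n : ℕ} (D : SimpleDigraph (Fin n))
    [h : ∀ a b, Decidable (D.Adj a b)] (v : Fin n)
    (a b : ({v}ᶜ : Set (Fin n))) : Decidable ((digraphCard D v).Adj a b) :=
  h a b

/-- The multiset of out-degrees of a digraph with decidable adjacency. -/
def scoreMS {V : Type} [Fintype V] (D : SimpleDigraph V)
    [∀ a b, Decidable (D.Adj a b)] : Multiset ℕ :=
  Finset.univ.val.map (fun v => (Finset.univ.filter (fun b => D.Adj v b)).card)

lemma scoreMS_eq_of_iso {V W : Type} [Fintype V] [Fintype W]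
    [DecidableEq V] [DecidableEq W]
    (D : SimpleDigraph V) (E : SimpleDigraph W)
    [∀ a b, Decidable (D.Adj a b)] [∀ a b, Decidable (E.Adj a b)]
    (h : D.Iso E) : scoreMS D = scoreMS E := by
  obtain ⟨e, he⟩ := h
  unfold scoreMS
  have hdeg : ∀ v, (Finset.univ.filter (fun b => D.Adj v b)).card
      = (Finset.univ.filter (fun b => E.Adj (e v) b)).card := by
    intro v
    apply Finset.card_bij (fun b _ => e b)
    · intro b hb
      simp only [Finset.mem_filter, Finset.mem_univ, true_and] at hb ⊢
      exact (he v b).1 hb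
    · intro a _ b _ hab
      exact e.injective hab
    · intro b hb
      refine ⟨e.symm b, ?_, by simp⟩
      simp only [Finset.mem_filter, Finset.mem_univ, true_and] at hb ⊢
      exact (he v (e.symm b)).2 (by simpa using hb)
  calc Finset.univ.val.map (fun v => (Finset.univ.filter (fun b => D.Adj v b)).card)
      = Finset.univ.val.map
          (fun v => (Finset.univ.filter (fun b => E.Adj (e v) b)).card) :=
        Multiset.map_congr rfl (fun v _ => hdeg v)
    _ = (Finset.univ.val.map e).map
          (fun w => (Finset.univ.filter (fun b => E.Adj w b)).card) := by
        rw [Multiset.map_map]; rfl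
    _ = Finset.univ.val.map
          (fun w => (Finset.univ.filter (fun b => E.Adj w b)).card) := by
        congr 1
        have : (Finset.univ.map e.toEmbedding) = (Finset.univ : Finset W) :=
          Finset.map_univ_equiv e
        calc Finset.univ.val.map e
            = (Finset.univ.map e.toEmbedding).val := rfl
          _ = (Finset.univ : Finset W).val := by rw [this]

/-- Restrict a permutation of `Fin 7` to an equivalence between complements
of singletons. -/
def restrictEquiv (π : Equiv.Perm (Fin 7)) (v : Fin 7) :
    ({v}ᶜ : Set (Fin 7)) ≃ ({π v}ᶜ : Set (Fin 7)) :=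
  Equiv.subtypeEquiv π (fun a => by
    simp [Set.mem_compl_iff])

/-- Build a permutation of `Fin 7` from explicit data. -/
def mkPerm (f g : Fin 7 → Fin 7) (h1 : ∀ x, g (f x) = x) (h2 : ∀ x, f (g x) = x) :
    Equiv.Perm (Fin 7) := ⟨f, g, h1, h2⟩

def p05 : Equiv.Perm (Fin 7) := mkPerm ![5,2,6,0,1,4,3] ![3,4,1,6,5,0,2] (by decide) (by decide)
def p10 : Equiv.Perm (Fin 7) := mkPerm ![2,0,6,3,1,5,4] ![1,4,0,3,6,5,2] (by decide) (by decide)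
def p22 : Equiv.Perm (Fin 7) := mkPerm ![1,0,2,4,3,6,5] ![1,0,2,4,3,6,5] (by decide) (by decide)
def p33 : Equiv.Perm (Fin 7) := mkPerm ![1,0,2,3,4,6,5] ![1,0,2,3,4,6,5] (by decide) (by decide)
def p44 : Equiv.Perm (Fin 7) := mkPerm ![2,1,6,0,4,5,3] ![3,1,0,6,4,5,2] (by decide) (by decide)
def p51 : Equiv.Perm (Fin 7) := mkPerm ![0,3,2,5,4,1,6] ![0,5,2,1,4,3,6] (by decide) (by decide)
def p60 : Equiv.Perm (Fin 7) := mkPerm ![1,3,2,5,4,6,0] ![6,0,2,1,4,3,5] (by decide) (by decide)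
def p26 : Equiv.Perm (Fin 7) := mkPerm ![2,1,6,3,0,5,4] ![4,1,0,3,6,5,2] (by decide) (by decide)

lemma iso05 : (digraphCard T1 0).Iso (digraphCard T2 5) := ⟨restrictEquiv p05 0, by decide⟩
lemma iso10 : (digraphCard T1 1).Iso (digraphCard T2 0) := ⟨restrictEquiv p10 1, by decide⟩
lemma iso22 : (digraphCard T1 2).Iso (digraphCard T2 2) := ⟨restrictEquiv p22 2, by decide⟩
lemma iso33 : (digraphCard T1 3).Iso (digraphCard T2 3) := ⟨restrictEquiv p33 3, by decide⟩
lemma iso44 : (digraphCard T1 4).Iso (digraphCard T2 4) := ⟨restrictEquiv p44 4, by decide⟩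
lemma iso51 : (digraphCard T1 5).Iso (digraphCard T2 1) := ⟨restrictEquiv p51 5, by decide⟩
lemma iso60 : (digraphCard T1 6).Iso (digraphCard T2 0) := ⟨restrictEquiv p60 6, by decide⟩
lemma iso26 : (digraphCard T1 2).Iso (digraphCard T2 6) := ⟨restrictEquiv p26 2, by decide⟩

theorem tournaments_seven_same_reduced_deck_different_deck :
    T1.IsTournament ∧ T2.IsTournament ∧ ¬ T1.Iso T2 ∧
      SameReducedDeckD T1 T2 ∧ ¬ SameDeckD T1 T2 := by
  refine ⟨?_, ?_, ?_, ⟨?_, ?_⟩, ?_⟩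
  · show ∀ a b : Fin 7, a ≠ b → (T1.Adj a b ↔ ¬ T1.Adj b a)
    decide
  · show ∀ a b : Fin 7, a ≠ b → (T2.Adj a b ↔ ¬ T2.Adj b a)
    decide
  · intro h
    have := scoreMS_eq_of_iso T1 T2 h
    exact absurd this (by decide)
  · intro v
    fin_cases v
    exacts [⟨5, iso05⟩, ⟨0, iso10⟩, ⟨2, iso22⟩, ⟨3, iso33⟩, ⟨4, iso44⟩,
      ⟨1, iso51⟩, ⟨0, iso60⟩]
  · intro w
    fin_cases w
    exacts [⟨1, iso10⟩, ⟨5, iso51⟩, ⟨2, iso22⟩, ⟨3, iso33⟩, ⟨4, iso44⟩,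
      ⟨0, iso05⟩, ⟨2, iso26⟩]
  · rintro ⟨σ, h⟩
    have key : (Finset.univ.val.map fun v : Fin 7 => scoreMS (digraphCard T1 v))
        = Finset.univ.val.map fun v : Fin 7 => scoreMS (digraphCard T2 v) := by
      calc (Finset.univ.val.map fun v : Fin 7 => scoreMS (digraphCard T1 v))
          = Finset.univ.val.map
              (fun v : Fin 7 => scoreMS (digraphCard T2 (σ v))) :=
            Multiset.map_congr rfl (fun v _ =>
              scoreMS_eq_of_iso (digraphCard T1 v) (digraphCard T2 (σ v)) (h v))
        _ = (Finset.univ.val.map σ).map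
              (fun w : Fin 7 => scoreMS (digraphCard T2 w)) := by
            rw [Multiset.map_map]; rfl
        _ = Finset.univ.val.map (fun w : Fin 7 => scoreMS (digraphCard T2 w)) := by
            congr 1
            have : (Finset.univ.map σ.toEmbedding) = (Finset.univ : Finset (Fin 7)) :=
              Finset.map_univ_equiv σ
            calc Finset.univ.val.map σ
                = (Finset.univ.map σ.toEmbedding).val := rfl
              _ = (Finset.univ : Finset (Fin 7)).val := by rw [this]
    exact absurd key (by decide)
end
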